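/- Let M_j = P_{Y_j|Xⁿ}, j = 1,…,k, be mechanisms on finite alphabets such that M_j satisfies ε_j-MI-DP for each j, and suppose the outputs Y₁,…,Y_k are conditionally independent given Xⁿ (i.e. the joint kernel factorizes as P_{Y₁,…,Y_k|Xⁿ} = ∏_j P_{Y_j|Xⁿ}). Then the combined mechanism P_{Y₁,…,Y_k|Xⁿ} satisfies (∑_{j=1}^k ε_j)-MI-DP: for every joint pmf P_{Xⁿ} and every index i, I(X_i; Y₁,…,Y_k | X^{−i}) ≤ ∑_{j=1}^k ε_j nats. -/

import Mathlib

/-!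
Write `R_Q(y | x^{-i})` for the output law of a channel `Q` given all coordinates but the
`i`-th. For the product channel `P = ∏ⱼ Qⱼ`, the log-ratio `log (P / R_P)` splits as
`∑ⱼ log (Qⱼ / R_{Qⱼ}) + log C` with `C = ∏ⱼ R_{Qⱼ} / R_P`. The first part averages to
`∑ⱼ I(X_i; Y_j | X^{-i})`. For the second, `log C ≤ C - 1`, and since `C` does not depend
on `x_i` its average may be taken against the law of `(X^{-i}, Y)`, where it integrates
`∏ⱼ R_{Qⱼ}`, of total mass one; so `E[log C] ≤ 0`.
-/

open Real
open scoped BigOperators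

/-- Two datasets are neighbors if they differ in exactly one coordinate. -/
def Neighbor {n : ℕ} {𝒳 : Fin n → Type*} (x x' : ∀ i, 𝒳 i) : Prop :=
  ∃ i, x i ≠ x' i ∧ ∀ j, j ≠ i → x j = x' j

/-- The conditional mutual information `I(X_i; Y | X^{−i})` (in nats) of the joint
distribution of `(Xⁿ, Y)` induced by a prior pmf `μ` on datasets and a mechanism
(channel) `Q = P_{Y|Xⁿ}`; here `X^{−i}` denotes all dataset coordinates except the
`i`-th.  The inner logarithm is `log (P(y|x) / P(y | x^{−i}))`. -/
noncomputable def condMI {n : ℕ} {𝒳 : Fin n → Type*} [∀ i, Fintype (𝒳 i)]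
    {𝒴 : Type*} [Fintype 𝒴]
    (μ : (∀ i, 𝒳 i) → ℝ) (Q : (∀ i, 𝒳 i) → 𝒴 → ℝ) (i : Fin n) : ℝ :=
  ∑ x, ∑ y, μ x * Q x y *
    log ((Q x y * ∑ a, μ (Function.update x i a)) /
      (∑ a, μ (Function.update x i a) * Q (Function.update x i a) y))

open Finset Function

section ProductKernel

variable {ι R : Type*} [Fintype ι] [DecidableEq ι] [CommSemiring R] {𝒴 : ι → Type*}
  [∀ j, Fintype (𝒴 j)]

lemma sum_prod_mul_apply (h : ∀ j, 𝒴 j → R) (hh : ∀ j, ∑ b, h j b = 1) (j : ι)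
    (g : 𝒴 j → R) :
    ∑ y : ∀ l, 𝒴 l, (∏ l, h l (y l)) * g (y j) = ∑ b, h j b * g b := by
  let G : ∀ l, 𝒴 l → R := update (fun _ _ => 1) j g
  have hG : ∀ y : ∀ l, 𝒴 l, ∏ l, G l (y l) = g (y j) := fun y => by
    rw [prod_eq_single j (fun l _ hl => by simp [G, update_of_ne hl]) (by simp)]
    simp [G]
  calc ∑ y : ∀ l, 𝒴 l, (∏ l, h l (y l)) * g (y j)
      = ∑ y : ∀ l, 𝒴 l, ∏ l, h l (y l) * G l (y l) := by
        refine sum_congr rfl fun y _ => ?_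
        rw [prod_mul_distrib, hG]
    _ = ∏ l, ∑ b, h l b * G l b := (Fintype.prod_sum fun l b => h l b * G l b).symm
    _ = ∑ b, h j b * g b := by
      rw [prod_eq_single j (fun l _ hl => by simp [G, update_of_ne hl, hh]) (by simp)]
      simp [G]

lemma sum_prod_mul_sum_apply (h : ∀ j, 𝒴 j → R) (hh : ∀ j, ∑ b, h j b = 1)
    (f : ∀ j, 𝒴 j → R) :
    ∑ y : ∀ l, 𝒴 l, (∏ l, h l (y l)) * ∑ j, f j (y j) = ∑ j, ∑ b, h j b * f j b := by
  simp only [mul_sum]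
  rw [sum_comm]
  exact sum_congr rfl fun j _ => sum_prod_mul_apply h hh j (f j)

end ProductKernel

section LeaveOneOut

variable {ι : Type*} [DecidableEq ι] {𝒳 : ι → Type*} [∀ i, Fintype (𝒳 i)] {𝒴 : Type*}

lemma sum_sum_update_eq_sum_sum [Fintype ι] {M : Type*} [AddCommMonoid M] (i : ι)
    (F : (∀ j, 𝒳 j) → 𝒳 i → M) :
    ∑ x, ∑ a, F (update x i a) (x i) = ∑ x, ∑ a, F x a := by
  simp only [← Fintype.sum_prod_type']
  exact Fintype.sum_bijective (fun p => (update p.1 i p.2, p.1 i))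
    (Involutive.bijective fun p => by simp) _ _ fun _ => rfl

-- `P_{X^{-i}}(x^{-i})` and `P_{Y|X^{-i}}(y|x^{-i})`, encoded as functions of `x` ignoring `x i`.
noncomputable def leaveOutMarginal (μ : (∀ i, 𝒳 i) → ℝ) (i : ι) (x : ∀ i, 𝒳 i) : ℝ :=
  ∑ a, μ (update x i a)

noncomputable def leaveOutChannel (μ : (∀ i, 𝒳 i) → ℝ) (Q : (∀ i, 𝒳 i) → 𝒴 → ℝ) (i : ι)
    (x : ∀ i, 𝒳 i) (y : 𝒴) : ℝ :=
  (∑ a, μ (update x i a) * Q (update x i a) y) / leaveOutMarginal μ i x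

variable {μ : (∀ i, 𝒳 i) → ℝ} {Q : (∀ i, 𝒳 i) → 𝒴 → ℝ} {i : ι}

lemma leaveOutMarginal_update (x : ∀ i, 𝒳 i) (a : 𝒳 i) :
    leaveOutMarginal μ i (update x i a) = leaveOutMarginal μ i x := by
  simp [leaveOutMarginal]

lemma leaveOutChannel_update (x : ∀ i, 𝒳 i) (a : 𝒳 i) (y : 𝒴) :
    leaveOutChannel μ Q i (update x i a) y = leaveOutChannel μ Q i x y := by
  simp [leaveOutChannel, leaveOutMarginal]

variable (hμ : ∀ x, 0 ≤ μ x)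
include hμ

lemma le_leaveOutMarginal (x : ∀ i, 𝒳 i) : μ x ≤ leaveOutMarginal μ i x := by
  simpa [leaveOutMarginal] using
    single_le_sum (f := fun a => μ (update x i a)) (fun a _ => hμ _) (mem_univ (x i))

lemma eq_zero_of_leaveOutMarginal_eq_zero {x : ∀ i, 𝒳 i} (hx : leaveOutMarginal μ i x = 0) :
    μ x = 0 :=
  le_antisymm (hx ▸ le_leaveOutMarginal hμ x) (hμ x)

variable (hQ : ∀ x y, 0 ≤ Q x y)
include hQ

lemma leaveOutChannel_nonneg (x : ∀ i, 𝒳 i) (y : 𝒴) : 0 ≤ leaveOutChannel μ Q i x y :=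
  div_nonneg (sum_nonneg fun _ _ => mul_nonneg (hμ _) (hQ _ _)) (sum_nonneg fun _ _ => hμ _)

lemma leaveOutChannel_pos {x : ∀ i, 𝒳 i} {y : 𝒴} (hx : 0 < μ x) (hy : 0 < Q x y) :
    0 < leaveOutChannel μ Q i x y := by
  have hD : μ x * Q x y ≤ ∑ a, μ (update x i a) * Q (update x i a) y := by
    simpa using single_le_sum (f := fun a => μ (update x i a) * Q (update x i a) y)
      (fun a _ => mul_nonneg (hμ _) (hQ _ _)) (mem_univ (x i))
  exact div_pos ((mul_pos hx hy).trans_le hD) (hx.trans_le (le_leaveOutMarginal hμ x))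

omit hQ in
lemma sum_leaveOutChannel [Fintype 𝒴] (hQ1 : ∀ x, ∑ y, Q x y = 1) {x : ∀ i, 𝒳 i}
    (hx : 0 < μ x) :
    ∑ y, leaveOutChannel μ Q i x y = 1 := by
  have hν : leaveOutMarginal μ i x ≠ 0 := (hx.trans_le (le_leaveOutMarginal hμ x)).ne'
  simp only [leaveOutChannel, ← sum_div]
  rw [sum_comm]
  simp only [← mul_sum, hQ1, mul_one]
  exact div_self hν

-- The tower property `E[Q(·, y) G] = E[E[Q(·, y) | X^{-i}] G]` for `G` a function of `X^{-i}`.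
omit hQ in
lemma sum_mul_leaveOutChannel_mul [Fintype ι] {G : (∀ i, 𝒳 i) → ℝ}
    (hG : ∀ x a, G (update x i a) = G x) (y : 𝒴) :
    ∑ x, μ x * leaveOutChannel μ Q i x y * G x = ∑ x, μ x * Q x y * G x := by
  set ν := leaveOutMarginal μ i
  let F : (∀ i, 𝒳 i) → 𝒳 i → ℝ := fun z b => μ (update z i b) / ν z * (μ z * Q z y) * G z
  calc ∑ x, μ x * leaveOutChannel μ Q i x y * G x
      = ∑ x, ∑ a, F (update x i a) (x i) := by
        refine sum_congr rfl fun x _ => ?_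
        simp only [F, leaveOutChannel, ν, leaveOutMarginal_update, hG, update_idem,
          update_eq_self, mul_div_assoc', div_mul_eq_mul_div, mul_sum, sum_div, sum_mul]
    _ = ∑ x, ∑ a, F x a := sum_sum_update_eq_sum_sum i F
    _ = ∑ x, μ x * Q x y * G x := by
        refine sum_congr rfl fun x _ => ?_
        rw [← sum_mul, ← sum_mul, ← sum_div]
        by_cases hν : ν x = 0
        · simp [eq_zero_of_leaveOutMarginal_eq_zero hμ hν]
        · rw [show ∑ a, μ (update x i a) = ν x from rfl, div_self hν, one_mul]

end LeaveOneOut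

lemma log_prod_div_le {κ : Type*} [Fintype κ] {q r : κ → ℝ} {t : ℝ} (hq : ∀ j, 0 < q j)
    (hr : ∀ j, 0 < r j) (ht : 0 < t) :
    log ((∏ j, q j) / t) ≤ ∑ j, log (q j / r j) + ((∏ j, r j) / t - 1) := by
  have hsplit : log ((∏ j, q j) / t) = ∑ j, log (q j / r j) + log ((∏ j, r j) / t) := by
    rw [log_div (prod_pos fun j _ => hq j).ne' ht.ne', log_div (prod_pos fun j _ => hr j).ne'
      ht.ne', log_prod fun j _ => (hq j).ne', log_prod fun j _ => (hr j).ne']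
    simp only [log_div (hq _).ne' (hr _).ne', sum_sub_distrib]
    ring
  have hrt : 0 < (∏ j, r j) / t := div_pos (prod_pos fun j _ => hr j) ht
  linarith [log_le_sub_one_of_pos hrt]

section Composition

variable {ι : Type*} [Fintype ι] [DecidableEq ι] {𝒳 : ι → Type*} [∀ i, Fintype (𝒳 i)]

noncomputable def condMutualInfo {𝒴 : Type*} [Fintype 𝒴] (μ : (∀ i, 𝒳 i) → ℝ)
    (Q : (∀ i, 𝒳 i) → 𝒴 → ℝ) (i : ι) : ℝ :=
  ∑ x, ∑ y, μ x * Q x y * log (Q x y / leaveOutChannel μ Q i x y)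

lemma condMI_eq_condMutualInfo {n : ℕ} {𝒳 : Fin n → Type*} [∀ i, Fintype (𝒳 i)] {𝒴 : Type*}
    [Fintype 𝒴] (μ : (∀ i, 𝒳 i) → ℝ) (Q : (∀ i, 𝒳 i) → 𝒴 → ℝ) (i : Fin n) :
    condMI μ Q i = condMutualInfo μ Q i := by
  simp only [condMutualInfo, leaveOutChannel, leaveOutMarginal, div_div_eq_mul_div, condMI]

variable {κ : Type*} [Fintype κ] [DecidableEq κ] {𝒴 : κ → Type*} [∀ j, Fintype (𝒴 j)]
  {Q : ∀ j, (∀ i, 𝒳 i) → 𝒴 j → ℝ} {μ : (∀ i, 𝒳 i) → ℝ}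
  (hQ : ∀ j x y, 0 ≤ Q j x y) (hQ1 : ∀ j x, ∑ y, Q j x y = 1) (hμ : ∀ x, 0 ≤ μ x) (i : ι)
include hQ hQ1 hμ

lemma sum_sum_mul_prod_leaveOutChannel_div_le_one (hμ1 : ∑ x, μ x = 1) :
    ∑ x, ∑ y : ∀ j, 𝒴 j, μ x * (∏ j, Q j x (y j)) *
      ((∏ j, leaveOutChannel μ (Q j) i x (y j)) /
        leaveOutChannel μ (fun x y => ∏ j, Q j x (y j)) i x y) ≤ 1 := by
  set P : (∀ i, 𝒳 i) → (∀ j, 𝒴 j) → ℝ := fun x y => ∏ j, Q j x (y j)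
  set RP := leaveOutChannel μ P i
  set R := fun j => leaveOutChannel μ (Q j) i
  have hRP : ∀ x y, 0 ≤ RP x y :=
    leaveOutChannel_nonneg hμ fun x y => prod_nonneg fun j _ => hQ j x (y j)
  have hprodR : ∀ x (y : ∀ j, 𝒴 j), 0 ≤ ∏ j, R j x (y j) := fun x y =>
    prod_nonneg fun j _ => leaveOutChannel_nonneg hμ (hQ j) x (y j)
  have hmass : ∀ x, μ x * ∏ j, ∑ b, R j x b = μ x := fun x => by
    rcases (hμ x).eq_or_lt with hx | hx
    · rw [← hx, zero_mul]
    · rw [prod_eq_one fun j _ => sum_leaveOutChannel hμ (hQ1 j) hx, mul_one]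
  calc ∑ x, ∑ y : ∀ j, 𝒴 j, μ x * P x y * ((∏ j, R j x (y j)) / RP x y)
      = ∑ y : ∀ j, 𝒴 j, ∑ x, μ x * RP x y * ((∏ j, R j x (y j)) / RP x y) := by
        rw [sum_comm]
        refine sum_congr rfl fun y _ => (sum_mul_leaveOutChannel_mul hμ (fun x a => ?_) y).symm
        simp only [R, RP, leaveOutChannel_update]
    _ ≤ ∑ y : ∀ j, 𝒴 j, ∑ x, μ x * ∏ j, R j x (y j) := by
        refine sum_le_sum fun y _ => sum_le_sum fun x _ => ?_
        rw [mul_assoc]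
        refine mul_le_mul_of_nonneg_left ?_ (hμ x)
        rcases (hRP x y).eq_or_lt with h0 | hpos
        · rw [← h0, zero_mul]
          exact hprodR x y
        · rw [mul_div_cancel₀ _ hpos.ne']
    _ = ∑ x, μ x := by
        rw [sum_comm]
        refine sum_congr rfl fun x _ => ?_
        rw [← mul_sum, ← Fintype.prod_sum, hmass]
    _ = 1 := hμ1

lemma condMutualInfo_prod_le (hμ1 : ∑ x, μ x = 1) :
    condMutualInfo μ (fun x (y : ∀ j, 𝒴 j) => ∏ j, Q j x (y j)) i ≤
      ∑ j, condMutualInfo μ (Q j) i := by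
  set P : (∀ i, 𝒳 i) → (∀ j, 𝒴 j) → ℝ := fun x y => ∏ j, Q j x (y j)
  set R := fun j => leaveOutChannel μ (Q j) i
  set C := fun x y => (∏ j, R j x (y j)) / leaveOutChannel μ P i x y
  have hP : ∀ x y, 0 ≤ P x y := fun x y => prod_nonneg fun j _ => hQ j x (y j)
  have hpoint : ∀ x y, μ x * P x y * log (P x y / leaveOutChannel μ P i x y) ≤
      μ x * P x y * (∑ j, log (Q j x (y j) / R j x (y j)) + (C x y - 1)) := fun x y => by
    rcases (mul_nonneg (hμ x) (hP x y)).eq_or_lt with h0 | hpos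
    · rw [← h0, zero_mul, zero_mul]
    refine mul_le_mul_of_nonneg_left ?_ hpos.le
    have hμx : 0 < μ x := pos_of_mul_pos_left hpos (hP x y)
    have hQx : ∀ j, 0 < Q j x (y j) := fun j => (hQ j x (y j)).lt_of_ne
      (prod_ne_zero_iff.mp (pos_of_mul_pos_right hpos (hμ x)).ne' j (mem_univ j)).symm
    exact log_prod_div_le hQx (fun j => leaveOutChannel_pos hμ (hQ j) hμx (hQx j))
      (leaveOutChannel_pos hμ hP hμx (prod_pos fun j _ => hQx j))
  have hcross : ∑ x, ∑ y, μ x * P x y * ∑ j, log (Q j x (y j) / R j x (y j)) =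
      ∑ j, condMutualInfo μ (Q j) i := by
    have hmarg : ∀ x, ∑ y, P x y * ∑ j, log (Q j x (y j) / R j x (y j)) =
        ∑ j, ∑ b, Q j x b * log (Q j x b / R j x b) := fun x =>
      sum_prod_mul_sum_apply (fun j => Q j x) (fun j => hQ1 j x)
        fun j b => log (Q j x b / R j x b)
    simp only [mul_assoc, ← mul_sum, hmarg]
    simp only [mul_sum]
    rw [sum_comm]
    simp only [condMutualInfo, R, mul_assoc]
  have hmass : ∑ x, ∑ y, μ x * P x y = 1 := by
    simp only [← mul_sum, P, ← Fintype.prod_sum, hQ1, prod_const_one, mul_one, hμ1]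
  calc condMutualInfo μ P i
      ≤ ∑ x, ∑ y, μ x * P x y * (∑ j, log (Q j x (y j) / R j x (y j)) + (C x y - 1)) :=
        sum_le_sum fun x _ => sum_le_sum fun y _ => hpoint x y
    _ = ∑ j, condMutualInfo μ (Q j) i + (∑ x, ∑ y, μ x * P x y * C x y - 1) := by
        simp only [mul_add, mul_sub, mul_one, sum_add_distrib, sum_sub_distrib, hcross, hmass]
    _ ≤ ∑ j, condMutualInfo μ (Q j) i := by
        linarith [sum_sum_mul_prod_leaveOutChannel_div_le_one hQ hQ1 hμ i hμ1]

end Composition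

theorem mi_dp_composition {n k : ℕ} {𝒳 : Fin n → Type*} [∀ i, Fintype (𝒳 i)]
    {𝒴 : Fin k → Type*} [∀ j, Fintype (𝒴 j)]
    (Q : ∀ j : Fin k, (∀ i, 𝒳 i) → 𝒴 j → ℝ) (ε : Fin k → ℝ)
    (hQ0 : ∀ j x y, 0 ≤ Q j x y) (hQ1 : ∀ j x, ∑ y, Q j x y = 1)
    (hMIDP : ∀ j : Fin k, ∀ (μ : (∀ i, 𝒳 i) → ℝ),
      (∀ x, 0 ≤ μ x) → (∑ x, μ x = 1) → ∀ i, condMI μ (Q j) i ≤ ε j) :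
    ∀ (μ : (∀ i, 𝒳 i) → ℝ), (∀ x, 0 ≤ μ x) → (∑ x, μ x = 1) →
      ∀ i, condMI μ (fun x (y : ∀ j, 𝒴 j) => ∏ j, Q j x (y j)) i ≤ ∑ j, ε j := by
  intro μ hμ0 hμ1 i
  calc condMI μ (fun x (y : ∀ j, 𝒴 j) => ∏ j, Q j x (y j)) i
      ≤ ∑ j, condMI μ (Q j) i := by
        simpa only [condMI_eq_condMutualInfo] using condMutualInfo_prod_le hQ0 hQ1 hμ0 i hμ1
    _ ≤ ∑ j, ε j := sum_le_sum fun j _ => hMIDP j μ hμ0 hμ1 i
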